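/- For weak compositions a and b, the product of monomial slide polynomials satisfies 𝔐_a · 𝔐_b = ∑_c C_{a,b}^c 𝔐_c, where C_{a,b}^c is the multiplicity of c in the overlapping slide product a ⧢_o b. In particular the monomial slide basis has nonnegative integer structure coefficients. -/

import Mathlib

open MvPolynomial

/-- The monomial `x^b` in `n` variables, for a weak composition recorded as a list. -/
noncomputable def xlist (n : ℕ) (b : List ℕ) : MvPolynomial (Fin n) ℤ :=
  ∏ i : Fin n, X i ^ b.getD (i : ℕ) 0

/-- Dominance order: every partial sum of `b` is at least that of `a`. -/
def DomL (b a : List ℕ) : Prop := ∀ k, (a.take k).sum ≤ (b.take k).sum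

/-- The positive part of a weak composition: delete all zero entries. -/
def posL (b : List ℕ) : List ℕ := b.filter (fun x => x ≠ 0)

/-- The monomial slide polynomial `𝔐_a` of a weak composition `a` of length `n`. -/
noncomputable def MSlide (n : ℕ) (a : List ℕ) : MvPolynomial (Fin n) ℤ :=
  ∑ᶠ (b : List ℕ) (_ : b.length = n ∧ DomL b a ∧ posL b = posL a), xlist n b

/-- Replace the nonzero entries of `c`, in order, by the entries of `v`; keep the zeros
of `c` in place.  (So `fillNZ c a'` is the weak composition `c_{a'}` with the same zero
positions as `c` whose remaining entries are those of `a'` in order.) -/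
def fillNZ : List ℕ → List ℕ → List ℕ
  | [], _ => []
  | 0 :: cs, v => 0 :: fillNZ cs v
  | (_ + 1) :: cs, [] => 0 :: fillNZ cs []
  | (_ + 1) :: cs, w :: ws => w :: fillNZ cs ws

/-- `(a', b') ∈ S(a, b)`: a pair of weak compositions of equal length `k ≤ n` with
`(a')⁺ = a⁺`, `(b')⁺ = b⁺`, `a' ≥ a`, `b' ≥ b` in dominance order, and
`a'_i + b'_i > 0` for all `i ≤ k`. -/
def InS (a b a' b' : List ℕ) : Prop :=
  a'.length = b'.length ∧ a'.length ≤ a.length ∧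
  posL a' = posL a ∧ posL b' = posL b ∧ DomL a' a ∧ DomL b' b ∧
  ∀ i, i < a'.length → 0 < a'.getD i 0 + b'.getD i 0

/-- `c = Bump(a', b')` (up to trailing zeros): `c⁺ = a' + b'` (entrywise sum), the weak
compositions `c_{a'}` and `c_{b'}` (same zero positions as `c`, remaining entries those
of `a'` resp. `b'` in order) satisfy `c_{a'} ≥ a` and `c_{b'} ≥ b`, and `c` is
dominance-least with these properties. -/
def IsBump (a b a' b' c : List ℕ) : Prop :=
  posL c = List.zipWith (· + ·) a' b' ∧
  DomL (fillNZ c a') a ∧ DomL (fillNZ c b') b ∧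
  ∀ c' : List ℕ, posL c' = List.zipWith (· + ·) a' b' →
    DomL (fillNZ c' a') a → DomL (fillNZ c' b') b → DomL c' c

/-- The multiplicity of `c` in the overlapping slide product `a ⧢_o b`: the number of
pairs `(a', b') ∈ S(a, b)` with `Bump(a', b') = c`. -/
noncomputable def ovSlideMult (a b c : List ℕ) : ℕ :=
  Nat.card {p : List ℕ × List ℕ // InS a b p.1 p.2 ∧ IsBump a b p.1 p.2 c}

/-!
Both sides expand into monomials: `𝔐_a 𝔐_b = ∑ x^(b₁ + b₂)` over the monomials `x^b₁` of `𝔐_a`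
and `x^b₂` of `𝔐_b`, and the right side is `∑_{(a', b') ∈ S(a, b)} ∑_{d ≥ Bump(a', b')} x^d`.
Dominance between two lists with the same positive part is the pointwise order of their
nonzero-count functions `k ↦ #{i < k | c_i ≠ 0}`, and these functions, for the candidates `c`
(`c⁺ = a' + b'`, `c_{a'} ≥ a`, `c_{b'} ≥ b`), are closed under pointwise minimum; so `Bump(a', b')`
exists and the `d ≥ Bump(a', b')` with `d⁺ = a' + b'` are exactly the candidates. Hence
`(b₁, b₂) ↦ ((a', b'), b₁ + b₂)`, where `a'`, `b'` are `b₁`, `b₂` restricted to the support of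
`b₁ + b₂`, is a bijection between the two index sets, with inverse
`((a', b'), d) ↦ (d_{a'}, d_{b'})`.
-/

@[simp] lemma posL_cons_zero (l : List ℕ) : posL (0 :: l) = posL l := by
  simp [posL]

@[simp] lemma posL_cons_succ (x : ℕ) (l : List ℕ) : posL ((x + 1) :: l) = (x + 1) :: posL l := by
  simp [posL]

lemma posL_cons_of_ne_zero {x : ℕ} (hx : x ≠ 0) (l : List ℕ) : posL (x :: l) = x :: posL l := by
  simp [posL, hx]

lemma ne_zero_of_mem_posL {x : ℕ} {l : List ℕ} (h : x ∈ posL l) : x ≠ 0 := by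
  simpa using List.of_mem_filter h

lemma posL_eq_self {l : List ℕ} (hl : ∀ x ∈ l, x ≠ 0) : posL l = l :=
  List.filter_eq_self.mpr (by simpa using hl)

lemma sum_posL (l : List ℕ) : (posL l).sum = l.sum := by
  induction l with
  | nil => rfl
  | cons x l ih =>
    rcases eq_or_ne x 0 with rfl | hx
    · simpa using ih
    · simp [posL_cons_of_ne_zero hx, ih]

lemma le_sum_of_posL_eq {l m : List ℕ} (h : posL l = posL m) {x : ℕ} (hx : x ∈ l) :
    x ≤ m.sum := by
  rcases eq_or_ne x 0 with rfl | hx0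
  · exact Nat.zero_le _
  · rw [← sum_posL, ← h]
    exact List.le_sum_of_mem (List.mem_filter_of_mem hx (by simpa using hx0))

lemma sum_take_lt_sum_take {v : List ℕ} (hv : ∀ x ∈ v, x ≠ 0) {m m' : ℕ} (h : m < m')
    (h' : m' ≤ v.length) : (v.take m).sum < (v.take m').sum :=
  calc (v.take m).sum < (v.take (m + 1)).sum := by
        rw [List.sum_take_succ _ _ (by omega)]
        exact Nat.lt_add_of_pos_right (Nat.pos_of_ne_zero (hv _ (List.getElem_mem _)))
    _ ≤ (v.take m').sum := List.monotone_sum_take v h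

lemma sum_take_of_length_le {l : List ℕ} {k : ℕ} (h : l.length ≤ k) : (l.take k).sum = l.sum := by
  rw [List.take_of_length_le h]

lemma sum_take_zipWith_add {u w : List ℕ} (h : u.length = w.length) (k : ℕ) :
    ((List.zipWith (· + ·) u w).take k).sum = (u.take k).sum + (w.take k).sum := by
  rw [List.take_zipWith, List.sum_add_sum_eq_sum_zipWith_of_length_eq _ _ (by simp [h])]

namespace DomL

lemma trans {c d e : List ℕ} (h₁ : DomL d c) (h₂ : DomL e d) : DomL e c :=
  fun k => (h₁ k).trans (h₂ k)

lemma antisymm {c d : List ℕ} (hlen : c.length = d.length) (h₁ : DomL c d) (h₂ : DomL d c) :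
    c = d :=
  List.eq_of_sum_take_eq hlen fun k _ => le_antisymm (h₂ k) (h₁ k)

end DomL

def nzCount (l : List ℕ) (k : ℕ) : ℕ := (posL (l.take k)).length

@[simp] lemma nzCount_nil (k : ℕ) : nzCount [] k = 0 := by simp [nzCount, posL]

@[simp] lemma nzCount_zero (l : List ℕ) : nzCount l 0 = 0 := by simp [nzCount, posL]

@[simp] lemma nzCount_cons_zero_succ (l : List ℕ) (k : ℕ) :
    nzCount (0 :: l) (k + 1) = nzCount l k := by
  simp [nzCount]

lemma nzCount_cons_succ {x : ℕ} (hx : x ≠ 0) (l : List ℕ) (k : ℕ) :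
    nzCount (x :: l) (k + 1) = nzCount l k + 1 := by
  simp [nzCount, posL_cons_of_ne_zero hx]

lemma nzCount_succ (l : List ℕ) (k : ℕ) :
    nzCount l (k + 1) = nzCount l k + if l.getD k 0 = 0 then 0 else 1 := by
  induction l generalizing k with
  | nil => simp
  | cons x l ih =>
    rcases eq_or_ne x 0 with rfl | hx
    · rcases k with _ | k
      · simp
      · simpa using ih k
    · rcases k with _ | k
      · simp [nzCount_cons_succ hx, hx]
      · simp [nzCount_cons_succ hx, ih k]; omega

lemma nzCount_of_length_le {l : List ℕ} {k : ℕ} (h : l.length ≤ k) :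
    nzCount l k = (posL l).length := by
  simp [nzCount, List.take_of_length_le h]

lemma nzCount_le (l : List ℕ) (k : ℕ) : nzCount l k ≤ (posL l).length :=
  ((List.take_sublist k l).filter _).length_le

lemma nzCount_mono (l : List ℕ) : Monotone (nzCount l) :=
  monotone_nat_of_le_succ fun k => by rw [nzCount_succ]; omega

@[simp] lemma length_fillNZ (c v : List ℕ) : (fillNZ c v).length = c.length := by
  induction c generalizing v with
  | nil => rfl
  | cons x c ih => rcases x with _ | x <;> rcases v with _ | ⟨w, v⟩ <;> simp [fillNZ, ih]

lemma sum_take_fillNZ (c v : List ℕ) (k : ℕ) :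
    ((fillNZ c v).take k).sum = (v.take (nzCount c k)).sum := by
  induction c generalizing v k with
  | nil => simp [fillNZ]
  | cons x c ih =>
    rcases k with _ | k
    · simp
    rcases x with _ | x
    · simp [fillNZ, ih]
    · rcases v with _ | ⟨w, v⟩ <;> simp [fillNZ, nzCount_cons_succ, ih]

lemma domL_fillNZ_iff {c v a : List ℕ} :
    DomL (fillNZ c v) a ↔ ∀ k, (a.take k).sum ≤ (v.take (nzCount c k)).sum := by
  simp only [DomL, sum_take_fillNZ]

lemma posL_fillNZ {c v : List ℕ} (h : v.length ≤ (posL c).length) :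
    posL (fillNZ c v) = posL v := by
  induction c generalizing v with
  | nil => simp_all [posL, fillNZ]
  | cons x c ih =>
    rcases x with _ | x
    · simpa [fillNZ] using ih (by simpa using h)
    · rcases v with _ | ⟨w, v⟩
      · simpa [fillNZ] using ih (v := []) (by simp)
      · have := ih (v := v) (by simpa [posL] using h)
        rcases eq_or_ne w 0 with rfl | hw
        · simpa [fillNZ] using this
        · simp [fillNZ, posL_cons_of_ne_zero hw, this]

lemma nzCount_fillNZ {c v : List ℕ} (hv : ∀ x ∈ v, x ≠ 0) (h : v.length = (posL c).length)
    (k : ℕ) : nzCount (fillNZ c v) k = nzCount c k := by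
  induction c generalizing v k with
  | nil => simp [fillNZ]
  | cons x c ih =>
    rcases k with _ | k
    · simp
    rcases x with _ | x
    · simpa [fillNZ] using ih hv (by simpa using h) k
    · rcases v with _ | ⟨w, v⟩
      · simp [posL] at h
      · rw [fillNZ, nzCount_cons_succ (hv w (by simp)), nzCount_cons_succ (by omega),
          ih (fun y hy => hv y (by simp [hy])) (by simpa [posL] using h)]

lemma fillNZ_posL (c : List ℕ) : fillNZ c (posL c) = c := by
  induction c with
  | nil => rfl
  | cons x c ih => rcases x with _ | x <;> simp [fillNZ, ih]

lemma sum_take_posL (l : List ℕ) (k : ℕ) :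
    (l.take k).sum = ((posL l).take (nzCount l k)).sum := by
  conv_lhs => rw [← fillNZ_posL l]
  exact sum_take_fillNZ l (posL l) k

lemma domL_iff_nzCount_le {c d : List ℕ} (hp : posL d = posL c) :
    DomL d c ↔ ∀ k, nzCount c k ≤ nzCount d k := by
  refine ⟨fun hd k => ?_, fun h k => ?_⟩
  · by_contra! hlt
    have := hd k
    rw [sum_take_posL c, sum_take_posL d, hp] at this
    exact this.not_gt (sum_take_lt_sum_take (fun _ => ne_zero_of_mem_posL) hlt (nzCount_le c k))
  · rw [sum_take_posL c, sum_take_posL d, hp]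
    exact List.monotone_sum_take _ (h k)

lemma fillNZ_of_forall_ne_zero {c v : List ℕ} (hc : ∀ x ∈ c, x ≠ 0) (h : v.length = c.length) :
    fillNZ c v = v := by
  induction c generalizing v with
  | nil => simp_all [fillNZ]
  | cons x c ih =>
    obtain ⟨x, rfl⟩ := Nat.exists_eq_succ_of_ne_zero (hc x (by simp))
    rcases v with _ | ⟨w, v⟩
    · simp at h
    · simp [fillNZ, ih (fun y hy => hc y (by simp [hy])) (by simpa using h)]

lemma zipWith_fillNZ {c u w : List ℕ} (h : u.length = w.length) :
    List.zipWith (· + ·) (fillNZ c u) (fillNZ c w) = fillNZ c (List.zipWith (· + ·) u w) := by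
  induction c generalizing u w with
  | nil => simp [fillNZ]
  | cons x c ih =>
    rcases x with _ | x
    · simp [fillNZ, ih h]
    · rcases u with _ | ⟨y, u⟩ <;> rcases w with _ | ⟨z, w⟩
      · simpa [fillNZ] using ih (u := []) (w := []) rfl
      all_goals simp_all [fillNZ]

lemma nzCount_le_self (l : List ℕ) (k : ℕ) : nzCount l k ≤ k :=
  (List.length_filter_le _ _).trans (List.length_take_le k l)

def restrictNZ : List ℕ → List ℕ → List ℕ
  | [], _ => []
  | _ :: _, [] => []
  | 0 :: c, _ :: b => restrictNZ c b
  | (_ + 1) :: c, y :: b => y :: restrictNZ c b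

def SuppSubset (b c : List ℕ) : Prop := List.Forall₂ (fun y x => x = 0 → y = 0) b c

lemma length_restrictNZ {c b : List ℕ} (h : c.length = b.length) :
    (restrictNZ c b).length = (posL c).length := by
  induction c generalizing b with
  | nil => simp [restrictNZ, posL]
  | cons x c ih =>
    rcases b with _ | ⟨y, b⟩
    · simp at h
    · rcases x with _ | x <;> simp [restrictNZ, ih (by simpa using h)]

lemma suppSubset_zipWith_left {b₁ b₂ : List ℕ} (h : b₁.length = b₂.length) :
    SuppSubset b₁ (List.zipWith (· + ·) b₁ b₂) := by
  induction b₁ generalizing b₂ with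
  | nil => exact List.Forall₂.nil
  | cons x b₁ ih =>
    rcases b₂ with _ | ⟨y, b₂⟩
    · simp at h
    · exact List.Forall₂.cons (fun hxy => by simp only at hxy; omega) (ih (by simpa using h))

lemma suppSubset_zipWith_right {b₁ b₂ : List ℕ} (h : b₁.length = b₂.length) :
    SuppSubset b₂ (List.zipWith (· + ·) b₁ b₂) := by
  rw [List.zipWith_comm_of_comm Nat.add_comm]
  exact suppSubset_zipWith_left h.symm

lemma fillNZ_restrictNZ {b c : List ℕ} (h : SuppSubset b c) : fillNZ c (restrictNZ c b) = b := by
  induction h with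
  | nil => rfl
  | @cons y x b c hyx _ ih =>
    rcases x with _ | x
    · simp [restrictNZ, fillNZ, hyx rfl, ih]
    · simp [restrictNZ, fillNZ, ih]

lemma restrictNZ_fillNZ {c v : List ℕ} (h : v.length = (posL c).length) :
    restrictNZ c (fillNZ c v) = v := by
  induction c generalizing v with
  | nil => simp_all [restrictNZ, posL]
  | cons x c ih =>
    rcases x with _ | x
    · simpa [fillNZ, restrictNZ] using ih (by simpa using h)
    · rcases v with _ | ⟨w, v⟩
      · simp at h
      · simpa [fillNZ, restrictNZ] using ih (by simpa using h)

lemma posL_restrictNZ {b c : List ℕ} (h : SuppSubset b c) : posL (restrictNZ c b) = posL b := by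
  conv_rhs => rw [← fillNZ_restrictNZ h]
  exact (posL_fillNZ (length_restrictNZ h.length_eq.symm).le).symm

lemma domL_restrictNZ {b c : List ℕ} (h : SuppSubset b c) : DomL (restrictNZ c b) b := by
  intro k
  calc (b.take k).sum = ((fillNZ c (restrictNZ c b)).take k).sum := by
        rw [fillNZ_restrictNZ h]
    _ = ((restrictNZ c b).take (nzCount c k)).sum := sum_take_fillNZ _ _ _
    _ ≤ ((restrictNZ c b).take k).sum := List.monotone_sum_take _ (nzCount_le_self c k)

lemma zipWith_restrictNZ_zipWith {b₁ b₂ : List ℕ} (h : b₁.length = b₂.length) :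
    List.zipWith (· + ·) (restrictNZ (List.zipWith (· + ·) b₁ b₂) b₁)
      (restrictNZ (List.zipWith (· + ·) b₁ b₂) b₂) = posL (List.zipWith (· + ·) b₁ b₂) := by
  induction b₁ generalizing b₂ with
  | nil => simp [restrictNZ, posL]
  | cons x b₁ ih =>
    rcases b₂ with _ | ⟨y, b₂⟩
    · simp at h
    · have := ih (b₂ := b₂) (by simpa using h)
      rcases Nat.eq_zero_or_pos (x + y) with hxy | hxy
      · simp_all [restrictNZ]
      · obtain ⟨s, hs⟩ := Nat.exists_eq_add_one_of_ne_zero hxy.ne'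
        simp [restrictNZ, hs, this]

structure IsCountFn (L n : ℕ) (g : ℕ → ℕ) : Prop where
  zero : g 0 = 0
  step : ∀ k, g (k + 1) = g k ∨ g (k + 1) = g k + 1
  top : g n = L

def maskOf (g : ℕ → ℕ) (n : ℕ) : List ℕ :=
  (List.range n).map fun i => if g (i + 1) = g i + 1 then 1 else 0

lemma nzCount_maskOf {L n : ℕ} {g : ℕ → ℕ} (hg : IsCountFn L n g) {k : ℕ} (hk : k ≤ n) :
    nzCount (maskOf g n) k = g k := by
  induction k with
  | zero => simp [hg.zero]
  | succ k ih =>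
    have hkn : k < n := by omega
    rw [nzCount_succ, ih hkn.le, List.getD_eq_getElem _ _ (by simpa [maskOf] using hkn)]
    rcases hg.step k with h | h <;> simp [maskOf, h]

lemma exists_nzCount_eq {v : List ℕ} (hv : ∀ x ∈ v, x ≠ 0) {n : ℕ} {g : ℕ → ℕ}
    (hg : IsCountFn v.length n g) :
    ∃ c : List ℕ, c.length = n ∧ posL c = v ∧ ∀ k ≤ n, nzCount c k = g k := by
  have hmask : v.length = (posL (maskOf g n)).length := by
    rw [← nzCount_of_length_le (k := n) (by simp [maskOf]), nzCount_maskOf hg le_rfl, hg.top]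
  refine ⟨fillNZ (maskOf g n) v, by simp [maskOf], ?_, fun k hk => ?_⟩
  · rw [posL_fillNZ hmask.le, posL_eq_self hv]
  · rw [nzCount_fillNZ hv hmask, nzCount_maskOf hg hk]

def IsBumpCand (a b a' b' c : List ℕ) : Prop :=
  posL c = List.zipWith (· + ·) a' b' ∧ DomL (fillNZ c a') a ∧ DomL (fillNZ c b') b

namespace InS

variable {a b a' b' : List ℕ}

lemma length_zipWith (hS : InS a b a' b') : (List.zipWith (· + ·) a' b').length = a'.length := by
  simp [hS.1]

lemma zipWith_ne_zero (hS : InS a b a' b') : ∀ x ∈ List.zipWith (· + ·) a' b', x ≠ 0 := by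
  intro x hx
  obtain ⟨i, hi, rfl⟩ := List.mem_iff_getElem.mp hx
  have hia : i < a'.length := hS.length_zipWith ▸ hi
  have := hS.2.2.2.2.2.2 i hia
  rw [List.getD_eq_getElem _ _ hia, List.getD_eq_getElem _ _ (hS.1 ▸ hia)] at this
  simp only [List.getElem_zipWith]
  omega

lemma sum_left (hS : InS a b a' b') : a'.sum = a.sum := by
  rw [← sum_posL a', ← sum_posL a, hS.2.2.1]

lemma sum_right (hS : InS a b a' b') : b'.sum = b.sum := by
  rw [← sum_posL b', ← sum_posL b, hS.2.2.2.1]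

lemma isBumpCand_zipWith (hS : InS a b a' b') :
    IsBumpCand a b a' b' (List.zipWith (· + ·) a' b') := by
  have hne := hS.zipWith_ne_zero
  refine ⟨posL_eq_self hne, ?_, ?_⟩
  · rw [fillNZ_of_forall_ne_zero hne hS.length_zipWith.symm]
    exact hS.2.2.2.2.1
  · rw [fillNZ_of_forall_ne_zero hne (hS.1 ▸ hS.length_zipWith.symm)]
    exact hS.2.2.2.2.2.1

end InS

section Candidates

variable {n : ℕ} {a b a' b' : List ℕ}

/-- `a` and `b` carry their whole mass in their first `n` entries, hence so do `fillNZ c a'` and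
`fillNZ c b'`. -/
lemma IsBumpCand.nzCount_of_le (hS : InS a b a' b') (ha : a.length = n) (hb : b.length = n)
    {c : List ℕ} (hc : IsBumpCand a b a' b' c) {k : ℕ} (hk : n ≤ k) :
    nzCount c k = a'.length := by
  have hle : nzCount c k ≤ a'.length := by
    simpa [hc.1, hS.length_zipWith] using nzCount_le c k
  by_contra hne
  have hA := (domL_fillNZ_iff.mp hc.2.1) k
  have hB := (domL_fillNZ_iff.mp hc.2.2) k
  rw [sum_take_of_length_le (ha ▸ hk), ← hS.sum_left] at hA
  rw [sum_take_of_length_le (hb ▸ hk), ← hS.sum_right] at hB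
  have hlt := sum_take_lt_sum_take hS.zipWith_ne_zero (lt_of_le_of_ne hle hne)
    hS.length_zipWith.ge
  rw [sum_take_zipWith_add hS.1, sum_take_zipWith_add hS.1, List.take_of_length_le le_rfl,
    List.take_of_length_le hS.1.ge] at hlt
  omega

lemma isBumpCand_of_nzCount (hS : InS a b a' b') (ha : a.length = n) (hb : b.length = n)
    {c : List ℕ} (hpos : posL c = List.zipWith (· + ·) a' b')
    (hA : ∀ k ≤ n, (a.take k).sum ≤ (a'.take (nzCount c k)).sum)
    (hB : ∀ k ≤ n, (b.take k).sum ≤ (b'.take (nzCount c k)).sum)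
    (htop : nzCount c n = a'.length) : IsBumpCand a b a' b' c := by
  have hbig : ∀ k, n ≤ k → a'.length ≤ nzCount c k := fun k hk =>
    htop ▸ nzCount_mono c hk
  refine ⟨hpos, domL_fillNZ_iff.mpr fun k => ?_, domL_fillNZ_iff.mpr fun k => ?_⟩
  · rcases le_or_gt k n with hk | hk
    · exact hA k hk
    · rw [sum_take_of_length_le (by omega), ← hS.sum_left, ← sum_take_of_length_le le_rfl]
      exact List.monotone_sum_take _ (hbig k hk.le)
  · rcases le_or_gt k n with hk | hk
    · exact hB k hk
    · rw [sum_take_of_length_le (by omega), ← hS.sum_right,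
        ← sum_take_of_length_le hS.1.ge]
      exact List.monotone_sum_take _ (hbig k hk.le)

lemma IsBumpCand.exists_nzCount_eq_min (hS : InS a b a' b') (ha : a.length = n) (hb : b.length = n)
    {c₁ c₂ : List ℕ} (h₁ : IsBumpCand a b a' b' c₁) (h₂ : IsBumpCand a b a' b' c₂) :
    ∃ m, m.length = n ∧ IsBumpCand a b a' b' m ∧
      ∀ k ≤ n, nzCount m k = min (nzCount c₁ k) (nzCount c₂ k) := by
  have hg : IsCountFn (List.zipWith (· + ·) a' b').length n
      fun k => min (nzCount c₁ k) (nzCount c₂ k) := by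
    refine ⟨by simp, fun k => ?_, ?_⟩
    · have := nzCount_succ c₁ k
      have := nzCount_succ c₂ k
      split_ifs at * <;> omega
    · simp [h₁.nzCount_of_le hS ha hb le_rfl, h₂.nzCount_of_le hS ha hb le_rfl,
        hS.length_zipWith]
  obtain ⟨m, hlen, hpos, hm⟩ := exists_nzCount_eq hS.zipWith_ne_zero hg
  refine ⟨m, hlen, isBumpCand_of_nzCount hS ha hb hpos (fun k hk => ?_) (fun k hk => ?_) ?_, hm⟩
  · rw [hm k hk, (List.monotone_sum_take a').map_min]
    exact le_min (domL_fillNZ_iff.mp h₁.2.1 k) (domL_fillNZ_iff.mp h₂.2.1 k)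
  · rw [hm k hk, (List.monotone_sum_take b').map_min]
    exact le_min (domL_fillNZ_iff.mp h₁.2.2 k) (domL_fillNZ_iff.mp h₂.2.2 k)
  · rw [hm n le_rfl, h₁.nzCount_of_le hS ha hb le_rfl, h₂.nzCount_of_le hS ha hb le_rfl,
      min_self]

/-- A candidate of length `n` minimising `∑_{k ≤ n} nzCount c k` is the bump: its minimum with
any other candidate cannot be smaller, so it lies below it. -/
theorem exists_isBump (hS : InS a b a' b') (ha : a.length = n) (hb : b.length = n) :
    ∃ c, c.length = n ∧ IsBump a b a' b' c := by
  let S := {c : List ℕ | c.length = n ∧ IsBumpCand a b a' b' c}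
  let f : List ℕ → ℕ := fun c => ∑ k ∈ Finset.range (n + 1), nzCount c k
  have hS₀ : S.Nonempty := by
    obtain ⟨m, hm, hcand, -⟩ :=
      hS.isBumpCand_zipWith.exists_nzCount_eq_min hS ha hb hS.isBumpCand_zipWith
    exact ⟨m, hm, hcand⟩
  obtain ⟨c₀, ⟨hlen, hc₀⟩, hmin⟩ := (InvImage.wf f wellFounded_lt).has_min S hS₀
  refine ⟨c₀, hlen, hc₀.1, hc₀.2.1, hc₀.2.2, fun c h₁ h₂ h₃ => ?_⟩
  have hc : IsBumpCand a b a' b' c := ⟨h₁, h₂, h₃⟩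
  obtain ⟨m, hmlen, hm, hmk⟩ := hc₀.exists_nzCount_eq_min hS ha hb hc
  have hle : ∀ k ∈ Finset.range (n + 1), nzCount m k ≤ nzCount c₀ k := fun k hk => by
    rw [hmk k (Finset.mem_range_succ_iff.mp hk)]
    exact min_le_left _ _
  have heq := (Finset.sum_eq_sum_iff_of_le hle).mp
    (le_antisymm (Finset.sum_le_sum hle) (not_lt.mp (hmin m ⟨hmlen, hm⟩)))
  refine (domL_iff_nzCount_le (h₁.trans hc₀.1.symm)).mpr fun k => ?_
  rcases le_or_gt k n with hk | hk
  · have := heq k (Finset.mem_range_succ_iff.mpr hk)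
    rw [hmk k hk] at this
    omega
  · rw [hc₀.nzCount_of_le hS ha hb hk.le, hc.nzCount_of_le hS ha hb hk.le]

end Candidates

lemma IsBump.unique {a b a' b' c₁ c₂ : List ℕ} (h₁ : IsBump a b a' b' c₁)
    (h₂ : IsBump a b a' b' c₂) (hlen : c₁.length = c₂.length) : c₁ = c₂ :=
  DomL.antisymm hlen (h₂.2.2.2 c₁ h₁.1 h₁.2.1 h₁.2.2.1) (h₁.2.2.2 c₂ h₂.1 h₂.2.1 h₂.2.2.1)

lemma finite_setOf_length_le_forall_le (n M : ℕ) :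
    {l : List ℕ | l.length ≤ n ∧ ∀ x ∈ l, x ≤ M}.Finite := by
  refine ((List.finite_length_le (Fin (M + 1)) n).image (List.map Fin.val)).subset ?_
  rintro l ⟨hl, hM⟩
  refine ⟨l.map (Fin.ofNat (M + 1)), by simpa using hl, ?_⟩
  rw [List.map_map]
  nth_rw 2 [← List.map_id l]
  exact List.map_congr_left fun x hx => by
    simp [Nat.mod_eq_of_lt (Nat.lt_succ_of_le (hM x hx))]

lemma finite_setOf_mSlide (n : ℕ) (c : List ℕ) :
    {d : List ℕ | d.length = n ∧ DomL d c ∧ posL d = posL c}.Finite :=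
  (finite_setOf_length_le_forall_le n c.sum).subset
    fun _ hd => ⟨hd.1.le, fun _ hx => le_sum_of_posL_eq hd.2.2 hx⟩

noncomputable def slideSet (n : ℕ) (c : List ℕ) : Finset (List ℕ) :=
  (finite_setOf_mSlide n c).toFinset

lemma mem_slideSet {n : ℕ} {c d : List ℕ} :
    d ∈ slideSet n c ↔ d.length = n ∧ DomL d c ∧ posL d = posL c := by
  simp [slideSet]

lemma mSlide_eq_sum (n : ℕ) (c : List ℕ) : MSlide n c = ∑ d ∈ slideSet n c, xlist n d := by
  rw [MSlide, ← finsum_mem_coe_finset]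
  simp only [Finset.mem_coe, mem_slideSet]

lemma xlist_zipWith_add {n : ℕ} {u w : List ℕ} (hu : u.length = n) (hw : w.length = n) :
    xlist n (List.zipWith (· + ·) u w) = xlist n u * xlist n w := by
  rw [xlist, xlist, xlist, ← Finset.prod_mul_distrib]
  refine Finset.prod_congr rfl fun i _ => ?_
  have hiu : (i : ℕ) < u.length := hu ▸ i.isLt
  have hiw : (i : ℕ) < w.length := hw ▸ i.isLt
  rw [← pow_add, List.getD_eq_getElem _ _ (by simp [hiu, hiw]), List.getD_eq_getElem _ _ hiu,
    List.getD_eq_getElem _ _ hiw, List.getElem_zipWith]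

lemma finite_setOf_inS (a b : List ℕ) : {p : List ℕ × List ℕ | InS a b p.1 p.2}.Finite :=
  ((finite_setOf_length_le_forall_le a.length a.sum).prod
    (finite_setOf_length_le_forall_le a.length b.sum)).subset
    fun _ hp => ⟨⟨hp.2.1, fun _ hx => le_sum_of_posL_eq hp.2.2.1 hx⟩,
      ⟨hp.1 ▸ hp.2.1, fun _ hx => le_sum_of_posL_eq hp.2.2.2.1 hx⟩⟩

/-- The set `S(a, b)`. -/
noncomputable def pairSet (a b : List ℕ) : Finset (List ℕ × List ℕ) :=
  (finite_setOf_inS a b).toFinset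

lemma mem_pairSet {a b : List ℕ} {p : List ℕ × List ℕ} : p ∈ pairSet a b ↔ InS a b p.1 p.2 := by
  simp [pairSet]

/-- `Bump(a', b')` of length `n` (a junk value when `(a', b') ∉ S(a, b)`). -/
noncomputable def bump (n : ℕ) (a b : List ℕ) (p : List ℕ × List ℕ) : List ℕ :=
  Classical.epsilon fun c => c.length = n ∧ IsBump a b p.1 p.2 c

section Bump

variable {n : ℕ} {a b : List ℕ} {p : List ℕ × List ℕ}

lemma bump_spec (ha : a.length = n) (hb : b.length = n) (hp : p ∈ pairSet a b) :
    (bump n a b p).length = n ∧ IsBump a b p.1 p.2 (bump n a b p) :=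
  Classical.epsilon_spec (exists_isBump (mem_pairSet.mp hp) ha hb)

lemma isBump_iff_bump_eq (ha : a.length = n) (hb : b.length = n) (hp : p ∈ pairSet a b)
    {c : List ℕ} (hc : c.length = n) : IsBump a b p.1 p.2 c ↔ bump n a b p = c :=
  ⟨fun h => (bump_spec ha hb hp).2.unique h ((bump_spec ha hb hp).1.trans hc.symm),
    fun h => h ▸ (bump_spec ha hb hp).2⟩

lemma ovSlideMult_eq_card (ha : a.length = n) (hb : b.length = n) {c : List ℕ}
    (hc : c.length = n) :
    ovSlideMult a b c = ((pairSet a b).filter fun p => bump n a b p = c).card := by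
  rw [ovSlideMult, ← Set.ncard_coe_finset, ← Nat.card_coe_set_eq]
  congr! 3 with p
  simp only [Finset.coe_filter]
  exact ⟨fun h => ⟨mem_pairSet.mpr h.1, (isBump_iff_bump_eq ha hb (mem_pairSet.mpr h.1) hc).mp h.2⟩,
    fun h => ⟨mem_pairSet.mp h.1, (isBump_iff_bump_eq ha hb h.1 hc).mpr h.2⟩⟩

lemma mem_slideSet_bump (ha : a.length = n) (hb : b.length = n) (hp : p ∈ pairSet a b)
    {d : List ℕ} : d ∈ slideSet n (bump n a b p) ↔ d.length = n ∧ IsBumpCand a b p.1 p.2 d := by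
  obtain ⟨-, hpos, hA, hB, hmin⟩ := bump_spec ha hb hp
  rw [mem_slideSet, hpos]
  constructor
  · rintro ⟨hlen, hd, hdpos⟩
    have hcount := (domL_iff_nzCount_le (hdpos.trans hpos.symm)).mp hd
    refine ⟨hlen, hdpos, domL_fillNZ_iff.mpr fun k => ?_, domL_fillNZ_iff.mpr fun k => ?_⟩
    · exact (domL_fillNZ_iff.mp hA k).trans (List.monotone_sum_take _ (hcount k))
    · exact (domL_fillNZ_iff.mp hB k).trans (List.monotone_sum_take _ (hcount k))
  · rintro ⟨hlen, hd⟩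
    exact ⟨hlen, hmin d hd.1 hd.2.1 hd.2.2, hd.1⟩

end Bump

section Bijection

variable {n : ℕ} {a b b₁ b₂ : List ℕ}

lemma inS_restrictNZ (ha : a.length = n) (h₁ : b₁ ∈ slideSet n a) (h₂ : b₂ ∈ slideSet n b) :
    InS a b (restrictNZ (List.zipWith (· + ·) b₁ b₂) b₁)
      (restrictNZ (List.zipWith (· + ·) b₁ b₂) b₂) := by
  obtain ⟨hlen₁, hdom₁, hpos₁⟩ := mem_slideSet.mp h₁
  obtain ⟨hlen₂, hdom₂, hpos₂⟩ := mem_slideSet.mp h₂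
  have hlen : b₁.length = b₂.length := hlen₁.trans hlen₂.symm
  have hsum := zipWith_restrictNZ_zipWith hlen
  set c := List.zipWith (· + ·) b₁ b₂
  have hs₁ : SuppSubset b₁ c := suppSubset_zipWith_left hlen
  have hs₂ : SuppSubset b₂ c := suppSubset_zipWith_right hlen
  have hr₁ := length_restrictNZ hs₁.length_eq.symm
  have hr₂ := length_restrictNZ hs₂.length_eq.symm
  refine ⟨hr₁.trans hr₂.symm, ?_, (posL_restrictNZ hs₁).trans hpos₁,
    (posL_restrictNZ hs₂).trans hpos₂, hdom₁.trans (domL_restrictNZ hs₁),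
    hdom₂.trans (domL_restrictNZ hs₂), fun i hi => ?_⟩
  · rw [hr₁, ha, ← hlen₁, hs₁.length_eq]
    exact List.length_filter_le _ _
  · have hi₂ : i < (restrictNZ c b₂).length := by omega
    have hmem : (List.zipWith (· + ·) (restrictNZ c b₁) (restrictNZ c b₂))[i]'(by simp; omega)
        ∈ posL c := hsum ▸ List.getElem_mem _
    have hne := ne_zero_of_mem_posL hmem
    rw [List.getElem_zipWith] at hne
    rw [List.getD_eq_getElem _ _ hi, List.getD_eq_getElem _ _ hi₂]
    omega

lemma isBumpCand_zipWith_add (h₁ : b₁ ∈ slideSet n a) (h₂ : b₂ ∈ slideSet n b) :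
    IsBumpCand a b (restrictNZ (List.zipWith (· + ·) b₁ b₂) b₁)
      (restrictNZ (List.zipWith (· + ·) b₁ b₂) b₂) (List.zipWith (· + ·) b₁ b₂) := by
  obtain ⟨hlen₁, hdom₁, -⟩ := mem_slideSet.mp h₁
  obtain ⟨hlen₂, hdom₂, -⟩ := mem_slideSet.mp h₂
  have hlen : b₁.length = b₂.length := hlen₁.trans hlen₂.symm
  refine ⟨(zipWith_restrictNZ_zipWith hlen).symm, ?_, ?_⟩
  · rwa [fillNZ_restrictNZ (suppSubset_zipWith_left hlen)]
  · rwa [fillNZ_restrictNZ (suppSubset_zipWith_right hlen)]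

lemma fillNZ_mem_slideSet {a' b' d : List ℕ} (hS : InS a b a' b') (hd : d.length = n)
    (hc : IsBumpCand a b a' b' d) : fillNZ d a' ∈ slideSet n a ∧ fillNZ d b' ∈ slideSet n b := by
  have hlen : a'.length = (posL d).length := by rw [hc.1, hS.length_zipWith]
  refine ⟨mem_slideSet.mpr ⟨by simp [hd], hc.2.1, ?_⟩, mem_slideSet.mpr ⟨by simp [hd], hc.2.2, ?_⟩⟩
  · rw [posL_fillNZ hlen.le, hS.2.2.1]
  · rw [posL_fillNZ (hS.1 ▸ hlen).le, hS.2.2.2.1]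

end Bijection

section Product

variable {n : ℕ} {a b : List ℕ}

lemma mSlide_mul_mSlide (ha : a.length = n) (hb : b.length = n) :
    MSlide n a * MSlide n b =
      ∑ x ∈ (pairSet a b).sigma fun p => slideSet n (bump n a b p), xlist n x.2 := by
  rw [mSlide_eq_sum, mSlide_eq_sum, Finset.sum_mul_sum, ← Finset.sum_product']
  refine Finset.sum_nbij'
    (fun q => ⟨(restrictNZ (List.zipWith (· + ·) q.1 q.2) q.1,
      restrictNZ (List.zipWith (· + ·) q.1 q.2) q.2), List.zipWith (· + ·) q.1 q.2⟩)
    (fun x => (fillNZ x.2 x.1.1, fillNZ x.2 x.1.2)) ?_ ?_ ?_ ?_ ?_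
  · rintro ⟨b₁, b₂⟩ hq
    obtain ⟨h₁, h₂⟩ := Finset.mem_product.mp hq
    have hp := (mem_pairSet (p := (_, _))).mpr (inS_restrictNZ ha h₁ h₂)
    have hlen : (List.zipWith (· + ·) b₁ b₂).length = n := by
      simp [(mem_slideSet.mp h₁).1, (mem_slideSet.mp h₂).1]
    exact Finset.mem_sigma.mpr
      ⟨hp, (mem_slideSet_bump ha hb hp).mpr ⟨hlen, isBumpCand_zipWith_add h₁ h₂⟩⟩
  · rintro ⟨p, d⟩ hx
    obtain ⟨hp, hd⟩ := Finset.mem_sigma.mp hx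
    obtain ⟨hlen, hc⟩ := (mem_slideSet_bump ha hb hp).mp hd
    exact Finset.mem_product.mpr (fillNZ_mem_slideSet (mem_pairSet.mp hp) hlen hc)
  · rintro ⟨b₁, b₂⟩ hq
    obtain ⟨h₁, h₂⟩ := Finset.mem_product.mp hq
    have hlen := (mem_slideSet.mp h₁).1.trans (mem_slideSet.mp h₂).1.symm
    simp only [fillNZ_restrictNZ (suppSubset_zipWith_left hlen),
      fillNZ_restrictNZ (suppSubset_zipWith_right hlen)]
  · rintro ⟨⟨a', b'⟩, d⟩ hx
    obtain ⟨hp, hd⟩ := Finset.mem_sigma.mp hx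
    obtain ⟨-, hc⟩ := (mem_slideSet_bump ha hb hp).mp hd
    have hS := mem_pairSet.mp hp
    have hlen : a'.length = (posL d).length := by rw [hc.1, hS.length_zipWith]
    have hd : List.zipWith (· + ·) (fillNZ d a') (fillNZ d b') = d := by
      rw [zipWith_fillNZ hS.1, ← hc.1, fillNZ_posL]
    simp only [hd, restrictNZ_fillNZ hlen, restrictNZ_fillNZ (hS.1 ▸ hlen)]
  · rintro ⟨b₁, b₂⟩ hq
    obtain ⟨h₁, h₂⟩ := Finset.mem_product.mp hq
    exact (xlist_zipWith_add (mem_slideSet.mp h₁).1 (mem_slideSet.mp h₂).1).symm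

lemma finsum_ovSlideMult_smul (ha : a.length = n) (hb : b.length = n) :
    ∑ᶠ (c : List ℕ) (_ : c.length = n), (ovSlideMult a b c : ℤ) • MSlide n c =
      ∑ p ∈ pairSet a b, MSlide n (bump n a b p) := by
  classical
  have hsupp : (Function.support fun c : List ℕ =>
      ∑ᶠ _ : c.length = n, (ovSlideMult a b c : ℤ) • MSlide n c) ⊆
      ↑((pairSet a b).image (bump n a b)) := by
    intro c hc
    by_cases hlen : c.length = n
    · rw [Function.mem_support, finsum_eq_if, if_pos hlen, ovSlideMult_eq_card ha hb hlen] at hc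
      obtain ⟨p, hp⟩ := Finset.card_ne_zero.mp fun h => hc (by rw [h, Nat.cast_zero, zero_smul])
      exact Finset.mem_image.mpr ⟨p, Finset.mem_filter.mp hp⟩
    · simp [finsum_eq_if, hlen] at hc
  rw [finsum_eq_sum_of_support_subset _ hsupp, Finset.sum_comp]
  refine Finset.sum_congr rfl fun c hc => ?_
  obtain ⟨p, hp, rfl⟩ := Finset.mem_image.mp hc
  have hlen := (bump_spec ha hb hp).1
  rw [finsum_eq_if, if_pos hlen, ovSlideMult_eq_card ha hb hlen, natCast_zsmul]

end Product

/-- For weak compositions `a`, `b` (of length `n`), the product of monomial slide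
polynomials is `𝔐_a · 𝔐_b = ∑_c C_{a,b}^c 𝔐_c`, where `C_{a,b}^c` is the multiplicity of
`c` in the overlapping slide product `a ⧢_o b`.  In particular the monomial slide basis
has nonnegative integer structure coefficients. -/
theorem mslide_mult (n : ℕ) (a b : List ℕ) (ha : a.length = n) (hb : b.length = n) :
    MSlide n a * MSlide n b =
      ∑ᶠ (c : List ℕ) (_ : c.length = n), (ovSlideMult a b c : ℤ) • MSlide n c := by
  rw [finsum_ovSlideMult_smul ha hb, mSlide_mul_mSlide ha hb, Finset.sum_sigma]
  exact Finset.sum_congr rfl fun p _ => (mSlide_eq_sum n _).symm
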